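/- (Lower bound for smooth functions) Let K = B₂^d, let W ⊆ {-1,1}^d satisfy |W| ≥ 2^{d/6} and ⟨u,v⟩ ≤ d/2 for all distinct u, v ∈ W, let ν(a) = 0 for a ≤ 0 and ν(a) = a² for a > 0, and for V ⊆ W define h_V(x) = Σ_{w ∈ V} ν(⟨w/√d, x⟩ - 7/8). Let D be the uniform distribution over {h_V : V ⊆ W}, F_D(x) = E_V[h_V(x)], F* = min_{x ∈ K} F_D(x), and F_S(x) = (1/n) Σᵢ h_{Vᵢ}(x) for a sample S = (V₁,...,Vₙ). Then for every n ≤ d/6, with probability greater than 1/2 over S drawn as n i.i.d. uniform subsets of W, there exists x̂ ∈ K with F_S(x̂) = min_{x ∈ K} F_S(x) and F_D(x̂) - F* ≥ 1/128. -/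

import Mathlib

open scoped RealInnerProductSpace BigOperators
attribute [local instance] Classical.propDecidable

/-- `ν(a) = 0` for `a ≤ 0` and `ν(a) = a²` for `a > 0`. -/
noncomputable def nu (a : ℝ) : ℝ := if a ≤ 0 then 0 else a ^ 2

/-- `h_V(x) = Σ_{w ∈ V} ν(⟨w/√d, x⟩ - 7/8)`. -/
noncomputable def hV {d : ℕ} (V : Finset (EuclideanSpace ℝ (Fin d)))
    (x : EuclideanSpace ℝ (Fin d)) : ℝ :=
  ∑ w ∈ V, nu (⟪(Real.sqrt d)⁻¹ • w, x⟫ - 7/8)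


lemma nu_nonneg (a : ℝ) : 0 ≤ nu a := by
  unfold nu; split <;> positivity

lemma nu_of_nonpos {a : ℝ} (h : a ≤ 0) : nu a = 0 := by
  unfold nu; rw [if_pos h]

lemma hV_nonneg {d : ℕ} (V : Finset (EuclideanSpace ℝ (Fin d)))
    (x : EuclideanSpace ℝ (Fin d)) : 0 ≤ hV V x :=
  Finset.sum_nonneg fun _ _ => nu_nonneg _

lemma aux_half (N m : ℕ) (hN : 1 ≤ N) (hm : N ≤ m) :
    ((N:ℝ) - 1)^m < 1/2 * (N:ℝ)^m := by
  have hNR : (1:ℝ) ≤ (N:ℝ) := by exact_mod_cast hN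
  have hNpos : (0:ℝ) < N := by linarith
  set x : ℝ := ((N:ℝ) - 1)/N with hxdef
  have hx0 : 0 ≤ x := div_nonneg (by linarith) hNpos.le
  have hx1 : x ≤ 1 := by rw [hxdef, div_le_one hNpos]; linarith
  have hxeq : x = 1 - 1/N := by rw [hxdef]; field_simp
  have hxe : x ≤ Real.exp (-(1/N)) := by
    have := Real.add_one_le_exp (-(1/(N:ℝ)))
    rw [hxeq]; linarith
  have h1 : x^m ≤ x^N := pow_le_pow_of_le_one hx0 hx1 hm
  have h2 : x^N ≤ Real.exp (-(1/N)) ^ N := pow_le_pow_left₀ hx0 hxe N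
  have h3 : Real.exp (-(1/(N:ℝ))) ^ N = Real.exp (-1) := by
    rw [← Real.exp_nat_mul]; congr 1; field_simp
  have h4 : Real.exp (-1) < 1/2 := by
    have := Real.exp_one_gt_d9
    rw [Real.exp_neg, inv_lt_comm₀ (Real.exp_pos 1)] <;> nlinarith [this]
  have hxm : x^m < 1/2 := by rw [h3] at h2; linarith
  have hfac : ((N:ℝ) - 1)^m = x^m * (N:ℝ)^m := by
    rw [← mul_pow, hxdef]; congr 1; field_simp
  rw [hfac]
  have hNm : (0:ℝ) < (N:ℝ)^m := by positivity
  nlinarith [hNm]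

/-- Lower bound for smooth functions: Let `K = B₂^d`, `W ⊆ {-1,1}^d` with
`|W| ≥ 2^(d/6)` and `⟨u,v⟩ ≤ d/2` for distinct `u,v ∈ W`. With `F_D(x) = E_V[h_V(x)]`
for `V` uniform over subsets of `W`, `F* = min_K F_D`, and `F_S(x) = (1/n) Σᵢ h_{Vᵢ}(x)`,
for every `n ≤ d/6`, with probability `> 1/2` over `n` i.i.d. uniform subsets of `W`,
there exists `xhat ∈ K` with `F_S(xhat) = min_K F_S` and `F_D(xhat) - F* ≥ 1/128`. -/
theorem erm_lower_bound_smooth_l2 {d n : ℕ} (hd : 0 < d)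
    (W : Finset (EuclideanSpace ℝ (Fin d)))
    (hW : ∀ w ∈ W, ∀ i : Fin d, w i = 1 ∨ w i = -1)
    (hcard : (2 : ℝ) ^ ((d : ℝ) / 6) ≤ (W.card : ℝ))
    (hsep : ∀ u ∈ W, ∀ v ∈ W, u ≠ v → ⟪u, v⟫ ≤ (d : ℝ) / 2)
    (hn : (n : ℝ) ≤ (d : ℝ) / 6)
    (K : Set (EuclideanSpace ℝ (Fin d))) (hK : K = Metric.closedBall 0 1)
    (FD : EuclideanSpace ℝ (Fin d) → ℝ)
    (hFD : FD = fun x => (∑ V ∈ W.powerset, hV V x) / (W.powerset.card : ℝ))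
    (Fstar : ℝ) (hFstar : Fstar = sInf (FD '' K))
    (FS : (Fin n → Finset (EuclideanSpace ℝ (Fin d))) → EuclideanSpace ℝ (Fin d) → ℝ)
    (hFS : FS = fun Vs x => (∑ i : Fin n, hV (Vs i) x) / (n : ℝ)) :
    (((Fintype.piFinset fun _ : Fin n => W.powerset).filter
        (fun Vs => ∃ xhat ∈ K, (∀ y ∈ K, FS Vs xhat ≤ FS Vs y) ∧
          FD xhat - Fstar ≥ 1/128)).card : ℝ) /
      ((Fintype.piFinset fun _ : Fin n => W.powerset).card : ℝ) > 1/2 := by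
  classical
  have hdR : (0:ℝ) < d := by exact_mod_cast hd
  have hsq : Real.sqrt d * Real.sqrt d = (d:ℝ) := Real.mul_self_sqrt hdR.le
  have hsd0 : Real.sqrt d ≠ 0 := by positivity
  -- W is nonempty
  have hm1 : 1 ≤ W.card := by
    have h0 : (2:ℝ)^(0:ℝ) ≤ (2:ℝ)^((d:ℝ)/6) := by
      rw [Real.rpow_le_rpow_left_iff one_lt_two]; positivity
    rw [Real.rpow_zero] at h0
    have : (1:ℝ) ≤ (W.card : ℝ) := le_trans h0 hcard
    exact_mod_cast this
  -- inner products of sign vectors with themselves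
  have hinner_self : ∀ w ∈ W, ⟪w, w⟫ = (d:ℝ) := by
    intro w hw
    have h1 : ⟪w, w⟫ = ∑ i, w i * w i := by
      rw [PiLp.inner_apply]; exact Finset.sum_congr rfl fun i _ => by simp [RCLike.inner_apply, sq]
    rw [h1]
    calc ∑ i, w i * w i = ∑ _i : Fin d, (1:ℝ) :=
          Finset.sum_congr rfl fun i _ => by rcases hW w hw i with h | h <;> rw [h] <;> norm_num
      _ = d := by simp
  -- FD is nonnegative and FD 0 = 0, hence Fstar = 0
  have hFDnn : ∀ x, 0 ≤ FD x := by
    intro x; rw [hFD]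
    exact div_nonneg (Finset.sum_nonneg fun V _ => hV_nonneg V x) (Nat.cast_nonneg _)
  have h0K : (0 : EuclideanSpace ℝ (Fin d)) ∈ K := by rw [hK]; simp
  have hFD0 : FD 0 = 0 := by
    rw [hFD]
    beta_reduce
    have hz : ∀ V ∈ W.powerset, hV V (0 : EuclideanSpace ℝ (Fin d)) = 0 := by
      intro V _
      apply Finset.sum_eq_zero
      intro w _
      rw [inner_zero_right]
      exact nu_of_nonpos (by norm_num)
    rw [Finset.sum_congr rfl hz]
    simp
  have hstar0 : Fstar = 0 := by
    rw [hFstar]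
    apply le_antisymm
    · calc sInf (FD '' K) ≤ FD 0 :=
            csInf_le ⟨0, fun b ⟨x, _, hx⟩ => hx ▸ hFDnn x⟩ ⟨0, h0K, rfl⟩
        _ = 0 := hFD0
    · exact le_csInf ⟨FD 0, ⟨0, h0K, rfl⟩⟩ fun b ⟨x, _, hx⟩ => hx ▸ hFDnn x
  -- the key deterministic step
  have key : ∀ Vs ∈ (Fintype.piFinset fun _ : Fin n => W.powerset),
      (∃ w ∈ W, ∀ i, w ∉ Vs i) →
      ∃ xhat ∈ K, (∀ y ∈ K, FS Vs xhat ≤ FS Vs y) ∧ FD xhat - Fstar ≥ 1/128 := by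
    rintro Vs hVsS ⟨w, hwW, hw⟩
    have hVsub : ∀ i, Vs i ⊆ W := fun i =>
      Finset.mem_powerset.mp ((Fintype.mem_piFinset.mp hVsS) i)
    have hxi : ∀ v : EuclideanSpace ℝ (Fin d),
        ⟪(Real.sqrt d)⁻¹ • v, (Real.sqrt d)⁻¹ • w⟫ = ⟪v, w⟫ / d := by
      intro v
      rw [real_inner_smul_left, real_inner_smul_right,
        show (Real.sqrt d)⁻¹ * ((Real.sqrt d)⁻¹ * ⟪v, w⟫)
           = ⟪v, w⟫ / (Real.sqrt d * Real.sqrt d) by field_simp, hsq]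
    have hxK : (Real.sqrt d)⁻¹ • w ∈ K := by
      rw [hK, Metric.mem_closedBall, dist_zero_right]
      have h2 : ‖(Real.sqrt d)⁻¹ • w‖^2 = 1 := by
        rw [← real_inner_self_eq_norm_sq, hxi w, hinner_self w hwW, div_self hdR.ne']
      nlinarith [norm_nonneg ((Real.sqrt d)⁻¹ • w), h2]
    have harg : ∀ v ∈ W, v ≠ w →
        ⟪(Real.sqrt d)⁻¹ • v, (Real.sqrt d)⁻¹ • w⟫ - 7/8 ≤ 0 := by
      intro v hv hne
      rw [hxi v]
      have hs := hsep v hv w hwW hne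
      have : ⟪v, w⟫ / d ≤ 1/2 := by rw [div_le_iff₀ hdR]; linarith
      linarith
    have hhVx : ∀ V, V ⊆ W →
        hV V ((Real.sqrt d)⁻¹ • w) = if w ∈ V then 1/64 else 0 := by
      intro V hVW
      unfold hV
      by_cases hwV : w ∈ V
      · rw [if_pos hwV, Finset.sum_eq_single_of_mem w hwV]
        · rw [hxi w, hinner_self w hwW, div_self hdR.ne']
          norm_num [nu]
        · intro v hvV hne
          exact nu_of_nonpos (harg v (hVW hvV) hne)
      · rw [if_neg hwV]
        apply Finset.sum_eq_zero
        intro v hvV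
        exact nu_of_nonpos (harg v (hVW hvV) (fun h => hwV (h ▸ hvV)))
    have hFSx : FS Vs ((Real.sqrt d)⁻¹ • w) = 0 := by
      rw [hFS]
      beta_reduce
      rw [Finset.sum_congr rfl fun i _ => by
        rw [hhVx (Vs i) (hVsub i), if_neg (hw i)]]
      simp
    have hFDx : FD ((Real.sqrt d)⁻¹ • w) = 1/128 := by
      obtain ⟨s, hws, hWs⟩ : ∃ s, w ∉ s ∧ W = insert w s :=
        ⟨W.erase w, Finset.notMem_erase w W, (Finset.insert_erase hwW).symm⟩
      have hsum : ∑ V ∈ W.powerset, hV V ((Real.sqrt d)⁻¹ • w)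
          = 2^(s.card) * (1/64 : ℝ) := by
        rw [Finset.sum_congr rfl fun V hVp => hhVx V (Finset.mem_powerset.mp hVp)]
        rw [hWs, Finset.sum_powerset_insert hws]
        have h1 : ∑ t ∈ s.powerset, (if w ∈ t then (1:ℝ)/64 else 0) = 0 := by
          apply Finset.sum_eq_zero
          intro t ht
          rw [if_neg (fun hwt => hws ((Finset.mem_powerset.mp ht) hwt))]
        have h2 : ∑ t ∈ s.powerset, (if w ∈ insert w t then (1:ℝ)/64 else 0)
            = 2^(s.card) * (1/64 : ℝ) := by
          rw [Finset.sum_congr rfl fun t _ => if_pos (Finset.mem_insert_self w t)]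
          rw [Finset.sum_const, Finset.card_powerset, nsmul_eq_mul]
          push_cast
          ring
        rw [h1, h2, zero_add]
      rw [hFD]
      beta_reduce
      rw [hsum, Finset.card_powerset, hWs, Finset.card_insert_of_notMem hws, pow_succ]
      push_cast
      have h2s : (0:ℝ) < 2^(s.card) := by positivity
      field_simp
      ring
    refine ⟨(Real.sqrt d)⁻¹ • w, hxK, ?_, ?_⟩
    · intro y _
      rw [hFSx, hFS]
      exact div_nonneg (Finset.sum_nonneg fun i _ => hV_nonneg _ _) (Nat.cast_nonneg _)
    · rw [hFDx, hstar0]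
      norm_num
  -- counting
  set Sfin := Fintype.piFinset fun _ : Fin n => W.powerset with hSfin
  set P : (Fin n → Finset (EuclideanSpace ℝ (Fin d))) → Prop :=
    fun Vs => ∃ w ∈ W, ∀ i, w ∉ Vs i with hP
  have hGB : (Sfin.filter P).card + (Sfin.filter fun Vs => ¬ P Vs).card = Sfin.card :=
    Finset.card_filter_add_card_filter_not P
  have htarget : (Sfin.filter P).card ≤ (Sfin.filter
      (fun Vs => ∃ xhat ∈ K, (∀ y ∈ K, FS Vs xhat ≤ FS Vs y) ∧
        FD xhat - Fstar ≥ 1/128)).card := by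
    apply Finset.card_le_card
    intro Vs hVs
    rw [Finset.mem_filter] at hVs ⊢
    exact ⟨hVs.1, key Vs hVs.1 hVs.2⟩
  -- bound on the bad set
  have hB : (Sfin.filter fun Vs => ¬ P Vs).card ≤ (2^n - 1)^(W.card) := by
    have hT : (Fintype.piFinset fun _ : {w // w ∈ W} =>
        (Finset.univ : Finset (Finset (Fin n))).erase ∅).card = (2^n - 1)^(W.card) := by
      rw [Fintype.card_piFinset]
      have hce : ((Finset.univ : Finset (Finset (Fin n))).erase ∅).card = 2^n - 1 := by
        rw [Finset.card_erase_of_mem (Finset.mem_univ _), Finset.card_univ,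
          Fintype.card_finset, Fintype.card_fin]
      simp [hce, Finset.prod_const, Fintype.card_coe]
    rw [← hT]
    apply Finset.card_le_card_of_injOn
      (fun Vs => fun w : {w // w ∈ W} =>
        Finset.univ.filter (fun i => (w : EuclideanSpace ℝ (Fin d)) ∈ Vs i))
    · intro Vs hVs
      simp only [Finset.mem_coe, Finset.mem_filter, hP] at hVs
      obtain ⟨hVsS, hVsP⟩ := hVs
      push_neg at hVsP
      rw [Finset.mem_coe, Fintype.mem_piFinset]
      intro w
      rw [Finset.mem_erase]
      obtain ⟨i, hi⟩ := hVsP w w.2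
      exact ⟨Finset.ne_empty_of_mem (Finset.mem_filter.mpr ⟨Finset.mem_univ i, hi⟩),
        Finset.mem_univ _⟩
    · intro Vs hVs Vs' hVs' heq
      rw [Finset.mem_coe, Finset.mem_filter] at hVs hVs'
      have hsub : ∀ i, Vs i ⊆ W := fun i =>
        Finset.mem_powerset.mp ((Fintype.mem_piFinset.mp hVs.1) i)
      have hsub' : ∀ i, Vs' i ⊆ W := fun i =>
        Finset.mem_powerset.mp ((Fintype.mem_piFinset.mp hVs'.1) i)
      funext i
      ext v
      constructor
      · intro hv
        have hvW : v ∈ W := hsub i hv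
        have h := congrFun heq ⟨v, hvW⟩
        beta_reduce at h
        have hmem : i ∈ Finset.univ.filter (fun j => v ∈ Vs j) :=
          Finset.mem_filter.mpr ⟨Finset.mem_univ i, hv⟩
        rw [h] at hmem
        exact (Finset.mem_filter.mp hmem).2
      · intro hv
        have hvW : v ∈ W := hsub' i hv
        have h := congrFun heq ⟨v, hvW⟩
        beta_reduce at h
        have hmem : i ∈ Finset.univ.filter (fun j => v ∈ Vs' j) :=
          Finset.mem_filter.mpr ⟨Finset.mem_univ i, hv⟩
        rw [← h] at hmem
        exact (Finset.mem_filter.mp hmem).2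
  -- cardinality of the whole space
  have hScard : (Sfin.card : ℝ) = ((2:ℝ)^n)^(W.card) := by
    rw [hSfin, Fintype.card_piFinset]
    simp only [Finset.card_powerset, Finset.prod_const, Finset.card_univ, Fintype.card_fin]
    push_cast
    rw [← pow_mul, ← pow_mul, Nat.mul_comm]
  -- 2^n ≤ W.card
  have hNm : 2^n ≤ W.card := by
    have h1 : (2:ℝ)^((n:ℝ)) ≤ (2:ℝ)^((d:ℝ)/6) := by
      rw [Real.rpow_le_rpow_left_iff one_lt_two]; exact hn
    have h2 : ((2^n : ℕ) : ℝ) ≤ (W.card : ℝ) := by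
      push_cast
      rw [← Real.rpow_natCast 2 n]
      linarith
    exact_mod_cast h2
  have hhalf := aux_half (2^n) W.card Nat.one_le_two_pow hNm
  have hBR : ((Sfin.filter fun Vs => ¬ P Vs).card : ℝ) ≤ ((2:ℝ)^n - 1)^(W.card) := by
    calc ((Sfin.filter fun Vs => ¬ P Vs).card : ℝ) ≤ (((2^n - 1)^(W.card) : ℕ) : ℝ) := by
          exact_mod_cast hB
      _ = ((2:ℝ)^n - 1)^(W.card) := by
          rw [Nat.cast_pow, Nat.cast_sub Nat.one_le_two_pow]
          push_cast
          ring
  have hcast : ((2^n : ℕ) : ℝ) = (2:ℝ)^n := by push_cast; ring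
  rw [hcast] at hhalf
  have hGBR : ((Sfin.filter P).card : ℝ) + ((Sfin.filter fun Vs => ¬ P Vs).card : ℝ)
      = (Sfin.card : ℝ) := by exact_mod_cast hGB
  have hSpos : (0:ℝ) < (Sfin.card : ℝ) := by rw [hScard]; positivity
  rw [gt_iff_lt, lt_div_iff₀ hSpos]
  have htargetR : ((Sfin.filter P).card : ℝ) ≤
      ((Sfin.filter (fun Vs => ∃ xhat ∈ K, (∀ y ∈ K, FS Vs xhat ≤ FS Vs y) ∧
        FD xhat - Fstar ≥ 1/128)).card : ℝ) := by exact_mod_cast htarget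
  rw [hScard] at hGBR ⊢
  linarith
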